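/- For the dynamic vertex cover problem, where a single edge is added to or deleted from the graph, RLS using the edge-based representation and fitness function f_e, starting from a search point that is a maximal matching (hence a 2-approximate vertex cover) of the instance before the change, finds a maximal matching, inducing a 2-approximate vertex cover of the new instance, in expected time O(m). -/

import Mathlib

open scoped ENNReal
open Classical

noncomputable section

/-- Probability that the Markov chain with transition kernel `K`, started at `x`,
has not visited the target set `A` during the time steps `0, 1, …, t`. -/
def survive {S : Type*} (K : S → S → ℝ≥0∞) (A : S → Prop) : ℕ → S → ℝ≥0∞
  | 0, x => if A x then 0 else 1
  | t + 1, x => if A x then 0 else ∑' y, K x y * survive K A t y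

/-- Expected hitting time of the set `A` for the Markov chain with kernel `K` started at `x`,
computed as `∑_{t ≥ 0} Pr(T > t)`. -/
def hitTime {S : Type*} (K : S → S → ℝ≥0∞) (A : S → Prop) (x : S) : ℝ≥0∞ :=
  ∑' t, survive K A t x

/-- One step of a (1+1)-type algorithm: an offspring `z` is sampled from the mutation
distribution `pm x ·`; it replaces `x` iff `accept x z` holds. -/
def eaKernel {S : Type*} (pm : S → S → ℝ≥0∞) (accept : S → S → Prop) (x y : S) : ℝ≥0∞ :=
  ∑' z, if (if accept x z then z else x) = y then pm x z else 0

/-- The number of one-bits of a bit string. -/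
def ones {n : ℕ} (x : Fin n → Bool) : ℕ := (Finset.univ.filter fun i => x i = true).card

/-- Standard bit mutation: each of the `n` bits is flipped independently with probability `1/n`. -/
def pmutEA (n : ℕ) (x y : Fin n → Bool) : ℝ≥0∞ :=
  ((n : ℝ≥0∞)⁻¹) ^ hammingDist x y * (1 - (n : ℝ≥0∞)⁻¹) ^ (n - hammingDist x y)

/-- RLS mutation: exactly one bit, chosen uniformly at random, is flipped. -/
def pmutRLS (n : ℕ) (x y : Fin n → Bool) : ℝ≥0∞ :=
  if hammingDist x y = 1 then (n : ℝ≥0∞)⁻¹ else 0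


/-- Standard bit mutation on bit strings indexed by an arbitrary finite type:
each position is flipped independently with probability `1/m` where `m` is the
number of positions. -/
def pmutEAg {α : Type*} [Fintype α] [DecidableEq α] (x y : α → Bool) : ℝ≥0∞ :=
  ((Fintype.card α : ℝ≥0∞)⁻¹) ^ hammingDist x y *
    (1 - (Fintype.card α : ℝ≥0∞)⁻¹) ^ (Fintype.card α - hammingDist x y)

/-- RLS mutation on bit strings indexed by an arbitrary finite type:
exactly one position, chosen uniformly at random, is flipped. -/
def pmutRLSg {α : Type*} [Fintype α] [DecidableEq α] (x y : α → Bool) : ℝ≥0∞ :=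
  if hammingDist x y = 1 then (Fintype.card α : ℝ≥0∞)⁻¹ else 0

variable {V : Type} [Fintype V] [DecidableEq V]

/-- The set `E(x)` of edges chosen by the search point `x` in the edge-based representation. -/
def chosenE (G : SimpleGraph V) [DecidableRel G.Adj] (x : G.edgeFinset → Bool) :
    Finset (Sym2 V) :=
  (Finset.univ.filter fun e : G.edgeFinset => x e = true).image Subtype.val

/-- The cover set `V_C(x)`: all vertices adjacent to at least one chosen edge. -/
def coverSet (G : SimpleGraph V) [DecidableRel G.Adj] (x : G.edgeFinset → Bool) : Finset V :=
  Finset.univ.filter fun v => ∃ e ∈ chosenE G x, v ∈ e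

/-- The fitness function `f_e` of the edge-based approach (to be minimized). -/
def fVC (G : SimpleGraph V) [DecidableRel G.Adj] (x : G.edgeFinset → Bool) : ℕ :=
  (coverSet G x).card +
    (Fintype.card V + 1) *
      (G.edgeFinset.filter fun e => ¬∃ v ∈ coverSet G x, v ∈ e).card +
    (Fintype.card V + 1) * (G.edgeFinset.card + 1) *
      ((chosenE G x ×ˢ chosenE G x).filter fun p =>
        p.1 ≠ p.2 ∧ ∃ v : V, v ∈ p.1 ∧ v ∈ p.2).card

/-- A set of edges is a matching if no two distinct edges of it share a vertex. -/
def IsMatchingSet (s : Finset (Sym2 V)) : Prop :=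
  ∀ e ∈ s, ∀ e' ∈ s, e ≠ e' → ∀ v : V, ¬(v ∈ e ∧ v ∈ e')

/-- `s` is a maximal matching of `G`: a matching consisting of edges of `G` such that every
edge of `G` shares a vertex with some edge of `s`. -/
def IsMaximalMatchingOf (G : SimpleGraph V) [DecidableRel G.Adj]
    (s : Finset (Sym2 V)) : Prop :=
  s ⊆ G.edgeFinset ∧ IsMatchingSet s ∧
    ∀ e ∈ G.edgeFinset, ∃ e' ∈ s, ∃ v : V, v ∈ e ∧ v ∈ e'

/-- `C` is a vertex cover of `G`. -/
def IsVertexCover (G : SimpleGraph V) [DecidableRel G.Adj] (C : Finset V) : Prop :=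
  ∀ e ∈ G.edgeFinset, ∃ v ∈ C, v ∈ e

/-- The dynamic-change hypothesis: the new graph `G'` is obtained from the old graph `G` by
adding or deleting the single edge `e`, and the initial search point `x₀` (over the edges of
`G'`) chooses a maximal matching of the old graph `G` (in the deletion case, a maximal
matching of `G` with the deleted edge removed). -/
def DynVCStart {V : Type} [Fintype V] [DecidableEq V]
    (G G' : SimpleGraph V) [DecidableRel G.Adj] [DecidableRel G'.Adj]
    (e : Sym2 V) (x₀ : G'.edgeFinset → Bool) : Prop :=
  (G'.edgeFinset = insert e G.edgeFinset ∧ e ∉ G.edgeFinset ∧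
      IsMaximalMatchingOf G (chosenE G' x₀)) ∨
    (G.edgeFinset = insert e G'.edgeFinset ∧ e ∉ G'.edgeFinset ∧
      ∃ M : Finset (Sym2 V), IsMaximalMatchingOf G M ∧ chosenE G' x₀ = M.erase e)

/-!
Starting from a maximal matching of the old graph, the chosen edges of the new instance form a
matching all of whose uncovered edges touch the changed edge `e₀`. Because of the penalty terms
of `f_e`, from a matching RLS accepts only flips that add an uncovered edge; such a flip
preserves this invariant and covers an endpoint of `e₀`. So the number of endpoints of `e₀` still
lying on an uncovered edge, at most two, never increases and drops with probability at least
`1/m` per step, which gives expected time at most `2m`.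
-/

section HittingTime

variable {S : Type*} {K : S → S → ℝ≥0∞} {A : S → Prop}

theorem survive_eq_zero_of_mem {x : S} (hx : A x) (t : ℕ) : survive K A t x = 0 := by
  cases t <;> simp [survive, hx]

theorem sum_range_survive_succ {x : S} (hx : ¬A x) (T : ℕ) :
    ∑ t ∈ Finset.range (T + 1), survive K A t x =
      1 + ∑' y, K x y * ∑ t ∈ Finset.range T, survive K A t y := by
  simp only [Finset.sum_range_succ', survive, hx, if_false, Finset.mul_sum]
  rw [add_comm, ← Summable.tsum_finsetSum fun _ _ => ENNReal.summable]

theorem hitTime_le_of_drift (Inv : S → Prop) (h : S → ℝ≥0∞)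
    (hInv : ∀ x y, Inv x → ¬A x → K x y ≠ 0 → Inv y)
    (hdrift : ∀ x, Inv x → ¬A x → 1 + ∑' y, K x y * h y ≤ h x)
    {x₀ : S} (h₀ : Inv x₀) : hitTime K A x₀ ≤ h x₀ := by
  suffices key : ∀ T x, Inv x → ∑ t ∈ Finset.range T, survive K A t x ≤ h x by
    rw [hitTime, ENNReal.tsum_eq_iSup_nat]
    exact iSup_le fun T => key T x₀ h₀
  intro T
  induction T with
  | zero => simp
  | succ T ih =>
    intro x hx
    by_cases hA : A x
    · simp [survive_eq_zero_of_mem hA]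
    calc ∑ t ∈ Finset.range (T + 1), survive K A t x
        = 1 + ∑' y, K x y * ∑ t ∈ Finset.range T, survive K A t y :=
          sum_range_survive_succ hA T
      _ ≤ 1 + ∑' y, K x y * h y := by
          refine add_le_add le_rfl (ENNReal.tsum_le_tsum fun y => ?_)
          by_cases hK : K x y = 0
          · simp [hK]
          · exact mul_le_mul_right (ih y (hInv x y hx hA hK)) _
      _ ≤ h x := hdrift x hx hA

theorem hitTime_le_of_potential (Inv : S → Prop) (Φ : S → ℕ) {p : ℝ≥0∞}
    (hp₀ : p ≠ 0) (hp : p ≠ ∞) (hK : ∀ x, ∑' y, K x y ≤ 1)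
    (hstep : ∀ x y, Inv x → ¬A x → K x y ≠ 0 → Inv y ∧ Φ y ≤ Φ x)
    (hprog : ∀ x, Inv x → ¬A x → p ≤ ∑' y, if Φ y < Φ x then K x y else 0)
    {x₀ : S} (h₀ : Inv x₀) : hitTime K A x₀ ≤ Φ x₀ / p := by
  refine hitTime_le_of_drift Inv (fun x => Φ x / p)
    (fun x y hx hA hK => (hstep x y hx hA hK).1) (fun x hx hA => ?_) h₀
  -- In expectation a step lowers `Φ` by at least `p`, so `Φ / p` drifts down by at least one.
  have hterm : ∀ y, K x y * Φ y + (if Φ y < Φ x then K x y else 0) ≤ K x y * Φ x := by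
    intro y
    by_cases hK : K x y = 0
    · simp [hK]
    have hle := (hstep x y hx hA hK).2
    split_ifs with hlt
    · calc K x y * Φ y + K x y = K x y * ((Φ y + 1 : ℕ) : ℝ≥0∞) := by push_cast; ring
        _ ≤ K x y * Φ x := by gcongr; exact hlt
    · simpa using mul_le_mul_right (Nat.cast_le.mpr hle) (K x y)
  have hsum : ∑' y, K x y * Φ y + p ≤ Φ x :=
    calc ∑' y, K x y * Φ y + p
        ≤ ∑' y, K x y * Φ y + ∑' y, (if Φ y < Φ x then K x y else 0) := by
          gcongr; exact hprog x hx hA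
      _ ≤ ∑' y, K x y * Φ x := by rw [← ENNReal.tsum_add]; exact ENNReal.tsum_le_tsum hterm
      _ ≤ Φ x := by rw [ENNReal.tsum_mul_right]; exact mul_le_of_le_one_left zero_le (hK x)
  calc 1 + ∑' y, K x y * (Φ y / p) = (p + ∑' y, K x y * Φ y) / p := by
        simp only [div_eq_mul_inv, ← mul_assoc, ENNReal.tsum_mul_right]
        rw [add_mul, ENNReal.mul_inv_cancel hp₀ hp]
    _ ≤ Φ x / p := by gcongr; rwa [add_comm]

end HittingTime

section RandomLocalSearch

variable {α : Type*} [DecidableEq α]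

theorem hammingDist_eq_one_iff [Fintype α] {x y : α → Bool} :
    hammingDist x y = 1 ↔ ∃ i, y = Function.update x i (!x i) := by
  constructor
  · intro h
    obtain ⟨i, hi⟩ := Finset.card_eq_one.mp h
    refine ⟨i, funext fun j => ?_⟩
    have hj := Finset.ext_iff.mp hi j
    simp only [Finset.mem_filter, Finset.mem_univ, true_and, Finset.mem_singleton] at hj
    by_cases hji : j = i
    · subst hji
      revert hj
      cases x j <;> cases y j <;> simp
    · rw [Function.update_of_ne hji]
      exact (by simpa [hji] using hj : x j = y j).symm
  · rintro ⟨i, rfl⟩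
    refine Finset.card_eq_one.mpr ⟨i, Finset.ext fun j => ?_⟩
    by_cases hji : j = i <;> simp [hji]

theorem update_not_injective (x : α → Bool) :
    Function.Injective fun i => Function.update x i (!x i) := by
  intro i j hij
  by_contra hne
  simpa [Function.update_of_ne hne] using congrFun hij i

theorem tsum_pmutRLSg [Fintype α] [Nonempty α] (x : α → Bool) : ∑' y, pmutRLSg x y = 1 := by
  have hflips : (Finset.univ.filter fun y : α → Bool => hammingDist x y = 1) =
      Finset.univ.image fun i => Function.update x i (!x i) := by
    ext y
    simp only [Finset.mem_filter, Finset.mem_univ, true_and, Finset.mem_image,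
      hammingDist_eq_one_iff]
    exact exists_congr fun i => eq_comm
  rw [tsum_fintype]
  unfold pmutRLSg
  rw [← Finset.sum_filter, hflips, Finset.sum_const,
    Finset.card_image_of_injective _ (update_not_injective x), Finset.card_univ, nsmul_eq_mul]
  exact ENNReal.mul_inv_cancel (by exact_mod_cast Fintype.card_ne_zero) (ENNReal.natCast_ne_top _)

theorem pmutRLSg_ne_zero_iff [Fintype α] {x y : α → Bool} :
    pmutRLSg x y ≠ 0 ↔ hammingDist x y = 1 := by
  simp [pmutRLSg]

variable {S : Type*} (pm : S → S → ℝ≥0∞) (acc : S → S → Prop)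

theorem tsum_eaKernel (x : S) : ∑' y, eaKernel pm acc x y = ∑' z, pm x z := by
  unfold eaKernel
  rw [ENNReal.tsum_comm]
  exact tsum_congr fun z => tsum_ite_eq' _ _

theorem le_eaKernel {x z : S} (h : acc x z) : pm x z ≤ eaKernel pm acc x z := by
  unfold eaKernel
  refine le_trans ?_ (ENNReal.le_tsum z)
  simp [h]

theorem eaKernel_ne_zero {x y : S} (h : eaKernel pm acc x y ≠ 0) :
    y = x ∨ (pm x y ≠ 0 ∧ acc x y) := by
  obtain ⟨z, hz⟩ := not_forall.mp (mt ENNReal.tsum_eq_zero.mpr h)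
  split_ifs at hz with hacc hsel hsel
  · exact Or.inr ⟨hsel ▸ hz, hsel ▸ hacc⟩
  · exact absurd rfl hz
  · exact Or.inl hsel.symm
  · exact absurd rfl hz

end RandomLocalSearch

theorem Sym2.card_toFinset_le_two {α : Type*} [DecidableEq α] (z : Sym2 α) :
    z.toFinset.card ≤ 2 := by
  rw [Sym2.card_toFinset]
  split_ifs <;> omega

theorem IsMatchingSet.subset {α : Type} {s t : Finset (Sym2 α)} (ht : IsMatchingSet t)
    (h : s ⊆ t) : IsMatchingSet s :=
  fun e he e' he' => ht e (h he) e' (h he')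

theorem IsMatchingSet.insert {α : Type} [DecidableEq α] {s : Finset (Sym2 α)} {e : Sym2 α}
    (hs : IsMatchingSet s) (he : ∀ e' ∈ s, ∀ v ∈ e, v ∉ e') : IsMatchingSet (insert e s) := by
  intro e₁ h₁ e₂ h₂ hne v ⟨hv₁, hv₂⟩
  rw [Finset.mem_insert] at h₁ h₂
  rcases h₁ with rfl | h₁ <;> rcases h₂ with rfl | h₂
  · exact hne rfl
  · exact he e₂ h₂ v hv₁ hv₂
  · exact he e₁ h₁ v hv₂ hv₁
  · exact hs e₁ h₁ e₂ h₂ hne v ⟨hv₁, hv₂⟩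

theorem IsMatchingSet.card_le_of_isVertexCover {α : Type} [Fintype α] {G : SimpleGraph α}
    [DecidableRel G.Adj] {s : Finset (Sym2 α)} (hs : s ⊆ G.edgeFinset) (hm : IsMatchingSet s)
    {C : Finset α} (hC : IsVertexCover G C) : s.card ≤ C.card :=
  Finset.card_le_card_of_forall_subsingleton (fun e v => v ∈ e)
    (fun e he => (hC e (hs he)).imp fun _ => id)
    (fun v _ e₁ h₁ e₂ h₂ => by_contra fun hne => hm e₁ h₁.1 e₂ h₂.1 hne v ⟨h₁.2, h₂.2⟩)

section EdgeRepresentation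

variable (G : SimpleGraph V) [DecidableRel G.Adj]

def uncoveredEdges (x : G.edgeFinset → Bool) : Finset (Sym2 V) :=
  G.edgeFinset.filter fun e => ¬∃ v ∈ coverSet G x, v ∈ e

theorem two_le_card_of_edge (i : G.edgeFinset) : 2 ≤ Fintype.card V := by
  have hdiag := G.not_isDiag_of_mem_edgeSet (SimpleGraph.mem_edgeFinset.mp i.2)
  rw [← Sym2.card_toFinset_of_not_isDiag _ hdiag]
  exact Finset.card_le_univ _

variable {G} {x y : G.edgeFinset → Bool} {i : G.edgeFinset}

theorem mem_chosenE {e : Sym2 V} :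
    e ∈ chosenE G x ↔ ∃ h : e ∈ G.edgeFinset, x ⟨e, h⟩ = true := by
  simp [chosenE]

theorem coe_mem_chosenE : (i : Sym2 V) ∈ chosenE G x ↔ x i = true := by
  simp [mem_chosenE]

theorem chosenE_subset_edgeFinset : chosenE G x ⊆ G.edgeFinset :=
  fun _ he => (mem_chosenE.mp he).1

theorem mem_coverSet {v : V} : v ∈ coverSet G x ↔ ∃ e ∈ chosenE G x, v ∈ e := by
  simp [coverSet]

theorem mem_uncoveredEdges {e : Sym2 V} :
    e ∈ uncoveredEdges G x ↔ e ∈ G.edgeFinset ∧ ∀ e' ∈ chosenE G x, ∀ v ∈ e, v ∉ e' := by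
  simp only [uncoveredEdges, Finset.mem_filter, mem_coverSet]
  grind

theorem coverSet_eq_biUnion : coverSet G x = (chosenE G x).biUnion Sym2.toFinset := by
  ext v
  simp [mem_coverSet]

theorem uncoveredEdges_anti (h : chosenE G x ⊆ chosenE G y) :
    uncoveredEdges G y ⊆ uncoveredEdges G x := by
  intro e he
  rw [mem_uncoveredEdges] at he ⊢
  exact ⟨he.1, fun e' he' => he.2 e' (h he')⟩

theorem card_coverSet_le_of_subset_insert {e : Sym2 V}
    (h : chosenE G x ⊆ insert e (chosenE G y)) :
    (coverSet G x).card ≤ (coverSet G y).card + 2 := by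
  have hsub : coverSet G x ⊆ coverSet G y ∪ e.toFinset := by
    rw [coverSet_eq_biUnion, coverSet_eq_biUnion, Finset.union_comm, ← Finset.biUnion_insert]
    exact Finset.biUnion_subset_biUnion_of_subset_left _ h
  calc (coverSet G x).card ≤ (coverSet G y ∪ e.toFinset).card := Finset.card_le_card hsub
    _ ≤ (coverSet G y).card + 2 := (Finset.card_union_le _ _).trans (by
        have := e.card_toFinset_le_two; omega)

theorem chosenE_disjoint_uncoveredEdges : Disjoint (chosenE G x) (uncoveredEdges G x) := by
  rw [Finset.disjoint_left]
  intro e he heu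
  exact (mem_uncoveredEdges.mp heu).2 e he _ e.out_fst_mem e.out_fst_mem

theorem chosenE_update_true :
    chosenE G (Function.update x i true) = insert (i : Sym2 V) (chosenE G x) := by
  ext e
  by_cases he : e ∈ G.edgeFinset
  · lift e to G.edgeFinset using he
    simp only [coe_mem_chosenE, Finset.mem_insert, Subtype.coe_inj, Function.update_apply]
    split_ifs <;> simp_all
  · have hne : e ≠ i := fun h => he (h ▸ i.2)
    have hnot : ∀ z, e ∉ chosenE G z := fun _ h => he (chosenE_subset_edgeFinset h)
    simp [hne, hnot]

theorem chosenE_update_false :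
    chosenE G (Function.update x i false) = (chosenE G x).erase (i : Sym2 V) := by
  ext e
  by_cases he : e ∈ G.edgeFinset
  · lift e to G.edgeFinset using he
    simp only [coe_mem_chosenE, Finset.mem_erase, Function.update_apply]
    split_ifs <;> simp_all
  · have hnot : ∀ z, e ∉ chosenE G z := fun _ h => he (chosenE_subset_edgeFinset h)
    simp [hnot]

end EdgeRepresentation

section Fitness

variable {G : SimpleGraph V} [DecidableRel G.Adj] {x y : G.edgeFinset → Bool} {i : G.edgeFinset}

theorem fVC_of_isMatchingSet (hm : IsMatchingSet (chosenE G x)) :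
    fVC G x = (coverSet G x).card + (Fintype.card V + 1) * (uncoveredEdges G x).card := by
  have hcoll : ((chosenE G x ×ˢ chosenE G x).filter fun p =>
      p.1 ≠ p.2 ∧ ∃ v : V, v ∈ p.1 ∧ v ∈ p.2) = ∅ := by
    rw [Finset.filter_eq_empty_iff]
    rintro ⟨e₁, e₂⟩ hp ⟨hne, v, hv⟩
    rw [Finset.mem_product] at hp
    exact hm e₁ hp.1 e₂ hp.2 hne v hv
  rw [fVC, hcoll, uncoveredEdges, Finset.card_empty, mul_zero, add_zero]

/-- The penalty weight `(|V| + 1) (m + 1)` of a single collision exceeds the fitness of every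
matching. -/
theorem fVC_lt_of_not_isMatchingSet (hx : IsMatchingSet (chosenE G x))
    (hy : ¬IsMatchingSet (chosenE G y)) : fVC G x < fVC G y := by
  have hcoll : 0 < ((chosenE G y ×ˢ chosenE G y).filter fun p =>
      p.1 ≠ p.2 ∧ ∃ v : V, v ∈ p.1 ∧ v ∈ p.2).card := by
    simp only [IsMatchingSet, not_forall, not_not] at hy
    obtain ⟨e₁, h₁, e₂, h₂, hne, v, hv⟩ := hy
    exact Finset.card_pos.mpr
      ⟨(e₁, e₂), Finset.mem_filter.mpr ⟨Finset.mem_product.mpr ⟨h₁, h₂⟩, hne, v, hv⟩⟩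
  have hcover : (coverSet G x).card ≤ Fintype.card V := Finset.card_le_univ _
  have huncov : (uncoveredEdges G x).card ≤ G.edgeFinset.card := Finset.card_filter_le _ _
  calc fVC G x
      = (coverSet G x).card + (Fintype.card V + 1) * (uncoveredEdges G x).card :=
        fVC_of_isMatchingSet hx
    _ < (Fintype.card V + 1) * (G.edgeFinset.card + 1) := by nlinarith
    _ ≤ fVC G y := (Nat.le_mul_of_pos_right _ hcoll).trans (Nat.le_add_left _ _)

theorem isMatchingSet_update_true (hm : IsMatchingSet (chosenE G x))
    (hu : (i : Sym2 V) ∈ uncoveredEdges G x) :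
    IsMatchingSet (chosenE G (Function.update x i true)) := by
  rw [chosenE_update_true]
  exact hm.insert (mem_uncoveredEdges.mp hu).2

theorem fVC_update_true_le (hm : IsMatchingSet (chosenE G x))
    (hu : (i : Sym2 V) ∈ uncoveredEdges G x) :
    fVC G (Function.update x i true) ≤ fVC G x := by
  have hchosen := chosenE_update_true (x := x) (i := i)
  have hcover : (coverSet G (Function.update x i true)).card ≤ (coverSet G x).card + 2 :=
    card_coverSet_le_of_subset_insert hchosen.le
  have huncov : (uncoveredEdges G (Function.update x i true)).card + 1 ≤
      (uncoveredEdges G x).card := by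
    rw [← Finset.card_erase_add_one hu, add_le_add_iff_right]
    refine Finset.card_le_card fun e he => Finset.mem_erase.mpr ⟨?_, ?_⟩
    · rintro rfl
      exact Finset.disjoint_left.mp chosenE_disjoint_uncoveredEdges
        (by simp [hchosen]) he
    · exact uncoveredEdges_anti (by simp [hchosen, Finset.subset_insert]) he
  have hn := two_le_card_of_edge G i
  rw [fVC_of_isMatchingSet hm, fVC_of_isMatchingSet (isMatchingSet_update_true hm hu)]
  nlinarith

theorem not_isMatchingSet_update_true (hi : x i = false)
    (hu : (i : Sym2 V) ∉ uncoveredEdges G x) :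
    ¬IsMatchingSet (chosenE G (Function.update x i true)) := by
  obtain ⟨e, he, v, hvi, hve⟩ : ∃ e ∈ chosenE G x, ∃ v ∈ (i : Sym2 V), v ∈ e := by
    simpa [mem_uncoveredEdges, i.2] using hu
  have hne : (i : Sym2 V) ≠ e := by
    rintro rfl
    simp [coe_mem_chosenE, hi] at he
  rw [chosenE_update_true]
  exact fun hm =>
    hm _ (Finset.mem_insert_self _ _) e (Finset.mem_insert_of_mem he) hne v ⟨hvi, hve⟩

theorem fVC_lt_update_false (hm : IsMatchingSet (chosenE G x)) (hi : x i = true) :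
    fVC G x < fVC G (Function.update x i false) := by
  have hchosen := chosenE_update_false (x := x) (i := i)
  have hsub : chosenE G (Function.update x i false) ⊆ chosenE G x := by
    simp [hchosen, Finset.erase_subset]
  have hcover : (coverSet G x).card ≤ (coverSet G (Function.update x i false)).card + 2 :=
    card_coverSet_le_of_subset_insert (e := i)
      (by rw [hchosen, Finset.insert_erase (coe_mem_chosenE.mpr hi)])
  have huncov : (uncoveredEdges G x).card + 1 ≤
      (uncoveredEdges G (Function.update x i false)).card := by
    have hi_chosen : (i : Sym2 V) ∈ chosenE G x := coe_mem_chosenE.mpr hi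
    have hi_unc : (i : Sym2 V) ∉ uncoveredEdges G x :=
      Finset.disjoint_left.mp chosenE_disjoint_uncoveredEdges hi_chosen
    rw [← Finset.card_insert_of_notMem hi_unc]
    refine Finset.card_le_card (Finset.insert_subset ?_ (uncoveredEdges_anti hsub))
    refine mem_uncoveredEdges.mpr ⟨i.2, fun e he v hvi hve => ?_⟩
    rw [hchosen, Finset.mem_erase] at he
    exact hm _ hi_chosen e he.2 (Ne.symm he.1) v ⟨hvi, hve⟩
  have hn := two_le_card_of_edge G i
  rw [fVC_of_isMatchingSet hm, fVC_of_isMatchingSet (hm.subset hsub)]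
  nlinarith

theorem eq_update_of_fVC_le (hm : IsMatchingSet (chosenE G x)) (hd : hammingDist x y = 1)
    (hacc : fVC G y ≤ fVC G x) :
    ∃ i : G.edgeFinset, (i : Sym2 V) ∈ uncoveredEdges G x ∧ y = Function.update x i true := by
  obtain ⟨i, rfl⟩ := hammingDist_eq_one_iff.mp hd
  cases hi : x i
  · rw [hi] at hacc
    by_cases hu : (i : Sym2 V) ∈ uncoveredEdges G x
    · exact ⟨i, hu, rfl⟩
    · exact absurd hacc (not_le.mpr
        (fVC_lt_of_not_isMatchingSet hm (not_isMatchingSet_update_true hi hu)))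
  · rw [hi] at hacc
    exact absurd hacc (not_le.mpr (fVC_lt_update_false hm hi))

end Fitness

section Reoptimization

variable {G : SimpleGraph V} [DecidableRel G.Adj] {x y : G.edgeFinset → Bool} {e₀ : Sym2 V}

variable (G) in
def IsNearMaximal (e₀ : Sym2 V) (x : G.edgeFinset → Bool) : Prop :=
  IsMatchingSet (chosenE G x) ∧ ∀ e ∈ uncoveredEdges G x, ∃ w ∈ e₀, w ∈ e

variable (G) in
def defect (e₀ : Sym2 V) (x : G.edgeFinset → Bool) : ℕ :=
  (e₀.toFinset.filter fun w => ∃ e ∈ uncoveredEdges G x, w ∈ e).card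

theorem defect_le_two : defect G e₀ x ≤ 2 :=
  (Finset.card_filter_le _ _).trans e₀.card_toFinset_le_two

theorem isMaximalMatchingOf_of_uncoveredEdges_eq_empty (hm : IsMatchingSet (chosenE G x))
    (h : uncoveredEdges G x = ∅) : IsMaximalMatchingOf G (chosenE G x) := by
  refine ⟨chosenE_subset_edgeFinset, hm, fun e he => ?_⟩
  have hcov : e ∉ uncoveredEdges G x := h ▸ Finset.notMem_empty e
  simpa [mem_uncoveredEdges, he] using hcov

theorem IsNearMaximal.update_true {i : G.edgeFinset} (hx : IsNearMaximal G e₀ x)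
    (hu : (i : Sym2 V) ∈ uncoveredEdges G x) :
    IsNearMaximal G e₀ (Function.update x i true) ∧
      defect G e₀ (Function.update x i true) < defect G e₀ x := by
  have hchosen := chosenE_update_true (x := x) (i := i)
  have hanti : uncoveredEdges G (Function.update x i true) ⊆ uncoveredEdges G x :=
    uncoveredEdges_anti (by simp [hchosen, Finset.subset_insert])
  refine ⟨⟨isMatchingSet_update_true hx.1 hu, fun e he => hx.2 e (hanti he)⟩, ?_⟩
  obtain ⟨w, hw₀, hwi⟩ := hx.2 _ hu
  refine Finset.card_lt_card (Finset.ssubset_iff_of_subset ?_ |>.mpr ⟨w, ?_, ?_⟩)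
  · exact Finset.monotone_filter_right _ fun w _ ⟨e, he, hwe⟩ => ⟨e, hanti he, hwe⟩
  · simp only [Finset.mem_filter, Sym2.mem_toFinset]
    exact ⟨hw₀, _, hu, hwi⟩
  · simp only [Finset.mem_filter, not_and, not_exists]
    intro _ e he hwe
    exact (mem_uncoveredEdges.mp he).2 i (by simp [hchosen]) w hwe hwi

theorem IsNearMaximal.of_eaKernel_ne_zero (hx : IsNearMaximal G e₀ x)
    (hK : eaKernel pmutRLSg (fun x z => fVC G z ≤ fVC G x) x y ≠ 0) :
    IsNearMaximal G e₀ y ∧ defect G e₀ y ≤ defect G e₀ x := by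
  rcases eaKernel_ne_zero _ _ hK with rfl | ⟨hd, hacc⟩
  · exact ⟨hx, le_rfl⟩
  · obtain ⟨i, hu, rfl⟩ := eq_update_of_fVC_le hx.1 (pmutRLSg_ne_zero_iff.mp hd) hacc
    exact (hx.update_true hu).imp_right le_of_lt

theorem IsNearMaximal.inv_card_le_tsum_defect_lt (hx : IsNearMaximal G e₀ x)
    (hA : ¬IsMaximalMatchingOf G (chosenE G x)) :
    (Fintype.card G.edgeFinset : ℝ≥0∞)⁻¹ ≤
      ∑' y, if defect G e₀ y < defect G e₀ x then
        eaKernel pmutRLSg (fun x z => fVC G z ≤ fVC G x) x y else 0 := by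
  obtain ⟨e, he⟩ := Finset.nonempty_iff_ne_empty.mpr
    (mt (isMaximalMatchingOf_of_uncoveredEdges_eq_empty hx.1) hA)
  set i : G.edgeFinset := ⟨e, (mem_uncoveredEdges.mp he).1⟩
  have hi : x i = false := by
    rw [← Bool.not_eq_true, ← coe_mem_chosenE]
    exact Finset.disjoint_right.mp chosenE_disjoint_uncoveredEdges he
  have hflip : Function.update x i true = Function.update x i (!x i) := by rw [hi]; rfl
  have hpm :
      pmutRLSg x (Function.update x i true) = (Fintype.card G.edgeFinset : ℝ≥0∞)⁻¹ := by
    rw [pmutRLSg, hflip, if_pos (hammingDist_eq_one_iff.mpr ⟨i, rfl⟩)]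
  calc (Fintype.card G.edgeFinset : ℝ≥0∞)⁻¹
      ≤ eaKernel pmutRLSg (fun x z => fVC G z ≤ fVC G x) x (Function.update x i true) :=
        hpm ▸ le_eaKernel _ _ (fVC_update_true_le hx.1 he)
    _ ≤ _ := by
        refine le_of_eq_of_le ?_ (ENNReal.le_tsum (Function.update x i true))
        rw [if_pos (hx.update_true he).2]

theorem isNearMaximal_of_dynVCStart {G₀ : SimpleGraph V} [DecidableRel G₀.Adj]
    (h : DynVCStart G₀ G e₀ x) : IsNearMaximal G e₀ x := by
  rcases h with ⟨hE, -, hM⟩ | ⟨hE, -, M, hM, hx⟩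
  · refine ⟨hM.2.1, fun e he => ?_⟩
    obtain ⟨heE, hunc⟩ := mem_uncoveredEdges.mp he
    rw [hE, Finset.mem_insert] at heE
    rcases heE with rfl | heE
    · exact ⟨_, e.out_fst_mem, e.out_fst_mem⟩
    · obtain ⟨e', he', v, hve, hve'⟩ := hM.2.2 e heE
      exact absurd hve' (hunc e' he' v hve)
  · refine ⟨hx ▸ hM.2.1.subset (Finset.erase_subset _ _), fun e he => ?_⟩
    obtain ⟨heE, hunc⟩ := mem_uncoveredEdges.mp he
    obtain ⟨e', he', v, hve, hve'⟩ := hM.2.2 e (hE ▸ Finset.mem_insert_of_mem heE)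
    by_cases he'₀ : e' = e₀
    · exact ⟨v, he'₀ ▸ hve', hve⟩
    · exact absurd hve' (hunc e' (hx ▸ Finset.mem_erase.mpr ⟨he'₀, he'⟩) v hve)

end Reoptimization

section Approximation

variable {G : SimpleGraph V} [DecidableRel G.Adj] {x : G.edgeFinset → Bool}

theorem card_coverSet_le_two_mul_card_chosenE :
    (coverSet G x).card ≤ 2 * (chosenE G x).card := by
  rw [coverSet_eq_biUnion, mul_comm]
  exact Finset.card_biUnion_le_card_mul _ _ _ fun e _ => e.card_toFinset_le_two

theorem IsMaximalMatchingOf.isVertexCover_coverSet (h : IsMaximalMatchingOf G (chosenE G x)) :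
    IsVertexCover G (coverSet G x) := by
  intro e he
  obtain ⟨e', he', v, hve, hve'⟩ := h.2.2 e he
  exact ⟨v, mem_coverSet.mpr ⟨e', he', hve'⟩, hve⟩

theorem IsMaximalMatchingOf.card_coverSet_le (h : IsMaximalMatchingOf G (chosenE G x))
    {C : Finset V} (hC : IsVertexCover G C) : (coverSet G x).card ≤ 2 * C.card :=
  card_coverSet_le_two_mul_card_chosenE.trans
    (Nat.mul_le_mul_left 2 (h.2.1.card_le_of_isVertexCover h.1 hC))

end Approximation

/-- For the dynamic vertex cover problem (one edge is added or deleted), RLS with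
the edge-based representation and fitness `f_e`, started from a maximal matching of the old
instance, finds a maximal matching of the new instance — inducing a 2-approximate vertex
cover — in expected time `O(m)`. -/
theorem stmt_10 :
    ∃ c : ℝ, 0 < c ∧ ∃ m₀ : ℕ,
      ∀ (V : Type) (_ : Fintype V) (_ : DecidableEq V)
        (G G' : SimpleGraph V) (_ : DecidableRel G.Adj) (_ : DecidableRel G'.Adj)
        (e : Sym2 V) (x₀ : G'.edgeFinset → Bool),
        m₀ ≤ G'.edgeFinset.card →
          DynVCStart G G' e x₀ →
            (hitTime (eaKernel pmutRLSg fun x z => fVC G' z ≤ fVC G' x)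
                (fun x => IsMaximalMatchingOf G' (chosenE G' x)) x₀ ≤
              ENNReal.ofReal (c * G'.edgeFinset.card)) ∧
            (∀ x : G'.edgeFinset → Bool, IsMaximalMatchingOf G' (chosenE G' x) →
              IsVertexCover G' (coverSet G' x) ∧
                ∀ C : Finset V, IsVertexCover G' C →
                  (coverSet G' x).card ≤ 2 * C.card) := by
  refine ⟨2, two_pos, 1, fun V _ _ G G' _ _ e x₀ hm hstart => ⟨?_, fun x hx =>
    ⟨hx.isVertexCover_coverSet, fun C hC => hx.card_coverSet_le hC⟩⟩⟩
  have hcard : Fintype.card G'.edgeFinset = G'.edgeFinset.card := Fintype.card_coe _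
  have : Nonempty G'.edgeFinset := Fintype.card_pos_iff.mp (by omega)
  calc hitTime _ _ x₀
      ≤ defect G' e x₀ / (Fintype.card G'.edgeFinset : ℝ≥0∞)⁻¹ :=
        hitTime_le_of_potential (IsNearMaximal G' e) (defect G' e)
          (ENNReal.inv_ne_zero.mpr (ENNReal.natCast_ne_top _))
          (ENNReal.inv_ne_top.mpr (by exact_mod_cast Fintype.card_ne_zero))
          (fun x => (tsum_eaKernel _ _ x).trans_le (tsum_pmutRLSg x).le)
          (fun _ _ hx _ hK => hx.of_eaKernel_ne_zero hK)
          (fun _ hx hA => hx.inv_card_le_tsum_defect_lt hA)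
          (isNearMaximal_of_dynVCStart hstart)
    _ ≤ 2 / (Fintype.card G'.edgeFinset : ℝ≥0∞)⁻¹ := by gcongr; exact_mod_cast defect_le_two
    _ = ENNReal.ofReal (2 * G'.edgeFinset.card) := by
        rw [div_eq_mul_inv, inv_inv, hcard, ENNReal.ofReal_mul zero_le_two]
        simp
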